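/- arXiv:2603.14508 — 4 statements merged into one kernel-verified Lean document; each statement's English description precedes it below -/
import Mathlib

section
/- For every permutation p of {1,...,n} with n >= 1, A(p) + B(p) + C(p) + D(p) + E(p) = n + 1, i.e., the five gap types partition the n+1 insertion gaps of p. -/
open List
open scoped Classical

/-- adjacent pairs of a list -/
def pairs (l : List ℕ) : List (ℕ × ℕ) := l.zip l.tail

/-- `l` is a permutation (as a word) of `{1, ..., n}` -/
def IsPermOf (n : ℕ) (l : List ℕ) : Prop := l.Perm (List.range' 1 n)

def T1 (l : List ℕ) : ℕ := (pairs l).countP (fun q => decide (q.2 < q.1 ∧ Odd q.1 ∧ Even q.2))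
def T2 (l : List ℕ) : ℕ := (pairs l).countP (fun q => decide (q.1 < q.2 ∧ Odd q.1 ∧ Odd q.2))
def T3 (l : List ℕ) : ℕ := (pairs l).countP (fun q => decide (q.2 < q.1 ∧ Odd q.1 ∧ Odd q.2))
def S10 (l : List ℕ) : ℕ := (pairs l).countP (fun q => decide (q.2 < q.1 ∧ Odd q.1))
def S12 (l : List ℕ) : ℕ := (pairs l).countP (fun q => decide (Odd q.1 ∧ Odd q.2))

/-- largest `i` such that the values `1, ..., i` appear in left-to-right order in `l` -/
def S17 (l : List ℕ) : ℕ :=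
  Nat.findGreatest (fun i => ∀ j < i, 1 ≤ j → l.idxOf j < l.idxOf (j + 1)) l.length

def statA (l : List ℕ) : ℕ :=
  (pairs l).countP (fun q => decide (Even q.1 ∧ Even q.2)) + (if Even (l.headD 1) then 1 else 0)
def statB (l : List ℕ) : ℕ :=
  (pairs l).countP (fun q => decide (q.2 < q.1 ∧ Odd q.1)) + (if Odd (l.getLastD 0) then 1 else 0)
def statC (l : List ℕ) : ℕ :=
  (pairs l).countP (fun q => decide ((Even q.1 ∧ Odd q.2) ∨ (q.1 < q.2 ∧ Odd q.1 ∧ Odd q.2))) +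
    (if Odd (l.headD 0) then 1 else 0)
def statD (l : List ℕ) : ℕ :=
  (pairs l).countP (fun q => decide (q.1 < q.2 ∧ Odd q.1 ∧ Even q.2))
def statE (l : List ℕ) : ℕ := if Even (l.getLastD 1) then 1 else 0

/-- the `i`-th entry of `l` (0-indexed), default 0 -/
def entry (l : List ℕ) (i : ℕ) : ℕ := l.getD i 0

/-- inserting `m` at gap `j` of `l` -/
def insertGap (l : List ℕ) (j : ℕ) (m : ℕ) : List ℕ := l.take j ++ m :: l.drop j

def IsAGap (l : List ℕ) (j : ℕ) : Prop :=
  (j = 0 ∧ Even (l.headD 1)) ∨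
  (1 ≤ j ∧ j < l.length ∧ Even (entry l (j - 1)) ∧ Even (entry l j))

def IsBGap (l : List ℕ) (j : ℕ) : Prop :=
  (1 ≤ j ∧ j < l.length ∧ entry l j < entry l (j - 1) ∧ Odd (entry l (j - 1))) ∨
  (j = l.length ∧ Odd (l.getLastD 0))

def IsCGap (l : List ℕ) (j : ℕ) : Prop :=
  (j = 0 ∧ Odd (l.headD 0)) ∨
  (1 ≤ j ∧ j < l.length ∧ ((Even (entry l (j - 1)) ∧ Odd (entry l j)) ∨
    (entry l (j - 1) < entry l j ∧ Odd (entry l (j - 1)) ∧ Odd (entry l j))))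

def IsDGap (l : List ℕ) (j : ℕ) : Prop :=
  1 ≤ j ∧ j < l.length ∧ entry l (j - 1) < entry l j ∧ Odd (entry l (j - 1)) ∧ Even (entry l j)

def IsEGap (l : List ℕ) (j : ℕ) : Prop := j = l.length ∧ Even (l.getLastD 1)

/-- the word `p_1 p_2 ... p_n` (values in `{1,...,n}`) of a permutation of `Fin n` -/
def word (n : ℕ) (p : Equiv.Perm (Fin n)) : List ℕ := List.ofFn (fun i => (p i : ℕ) + 1)

/-! Adjacent letters of a permutation are distinct, so each of the `n - 1` interior gaps is of
exactly one of the types A, B, C, D, decided by the parities and the relative order of its two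
neighbours. The gap before the first letter is of type A or C and the gap after the last letter of
type B or E, according to the parity of that letter. -/

lemma countP_gapTypes_eq_length (L : List (ℕ × ℕ)) (hL : ∀ q ∈ L, q.1 ≠ q.2) :
    L.countP (fun q => decide (Even q.1 ∧ Even q.2)) +
    L.countP (fun q => decide (q.2 < q.1 ∧ Odd q.1)) +
    L.countP (fun q => decide ((Even q.1 ∧ Odd q.2) ∨ (q.1 < q.2 ∧ Odd q.1 ∧ Odd q.2))) +
    L.countP (fun q => decide (q.1 < q.2 ∧ Odd q.1 ∧ Even q.2)) = L.length := by
  induction L with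
  | nil => simp
  | cons a t ih =>
    have hne : a.1 ≠ a.2 := hL a mem_cons_self
    have ih := ih fun q hq => hL q (mem_cons_of_mem _ hq)
    simp only [countP_cons, decide_eq_true_eq, length_cons, Nat.even_iff, Nat.odd_iff] at ih ⊢
    split_ifs <;> omega

lemma fst_ne_snd_of_mem_pairs : ∀ {l : List ℕ}, l.Nodup → ∀ q ∈ pairs l, q.1 ≠ q.2
  | [], _, q, hq | [_], _, q, hq => by simp [pairs] at hq
  | a :: b :: t, hl, q, hq => by
    simp only [pairs, tail_cons, zip_cons_cons, mem_cons] at hq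
    rcases hq with rfl | hq
    · rintro (hab : a = b)
      exact (nodup_cons.mp hl).1 (hab ▸ mem_cons_self)
    · exact fst_ne_snd_of_mem_pairs (nodup_cons.mp hl).2 q hq

lemma length_pairs (l : List ℕ) : (pairs l).length = l.length - 1 := by
  simp [pairs]

lemma ite_even_headD_add_ite_odd_headD {l : List ℕ} (hl : l ≠ []) :
    ((if Even (l.headD 1) then 1 else 0) : ℕ) + (if Odd (l.headD 0) then 1 else 0) = 1 := by
  obtain ⟨x, t, rfl⟩ := exists_cons_of_ne_nil hl
  rcases Nat.even_or_odd x with h | h <;>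
    simp [h, Nat.not_even_iff_odd.mpr, Nat.not_odd_iff_even.mpr]

lemma ite_odd_getLastD_add_ite_even_getLastD {l : List ℕ} (hl : l ≠ []) :
    ((if Odd (l.getLastD 0) then 1 else 0) : ℕ) + (if Even (l.getLastD 1) then 1 else 0) = 1 := by
  rcases Nat.even_or_odd (l.getLast hl) with h | h <;>
    simp [getLast?_eq_some_getLast hl, h, Nat.not_even_iff_odd.mpr, Nat.not_odd_iff_even.mpr]

theorem stmt2 (n : ℕ) (hn : 1 ≤ n) (l : List ℕ) (hl : IsPermOf n l) :
    statA l + statB l + statC l + statD l + statE l = n + 1 := by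
  have hlen : l.length = n := by simpa using hl.length_eq
  have hne : l ≠ [] := ne_nil_of_length_pos (hlen ▸ hn)
  have hpairs := countP_gapTypes_eq_length (pairs l)
    (fst_ne_snd_of_mem_pairs (hl.nodup_iff.mpr nodup_range'))
  rw [length_pairs, hlen] at hpairs
  have hfirst := ite_even_headD_add_ite_odd_headD hne
  have hlast := ite_odd_getLastD_add_ite_even_getLastD hne
  unfold statA statB statC statD statE
  omega
end

section
/- Let n be even and let p be a permutation of {1,...,n}. If q is obtained from p by inserting the odd value n+1 into any gap (at the start, between two adjacent entries, or at the end), then B(q) = B(p) + 1 - [the inserted gap was a B-gap], C(q) = C(p) + 1 - [the inserted gap was a C-gap], A(q) = A(p) - [the inserted gap was an A-gap], D(q) = D(p) - [the inserted gap was a D-gap], and E(q) = E(p) - [the inserted gap was the E-gap]. -/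
open List
open scoped Classical

/-!
Inserting an odd value `m` larger than every entry at gap `j` destroys gap `j` and creates the
two gaps on either side of `m`. The gap before `m` is always a C-gap (it is the start, or follows
an even entry, or is an ascent between odd entries), and the gap after `m` is always a B-gap (it
is the end, or a descent from the odd entry `m`). So B and C each gain one gap, and each
statistic loses one exactly when gap `j` was of its type.
-/

lemma pairs_singleton (x : ℕ) : pairs [x] = [] :=
  rfl

lemma pairs_cons_cons (x y : ℕ) (s : List ℕ) : pairs (x :: y :: s) = (x, y) :: pairs (y :: s) :=
  rfl

lemma pairs_append_cons (t : List ℕ) (a : ℕ) (r : List ℕ) :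
    pairs (t ++ a :: r) = pairs (t ++ [a]) ++ pairs (a :: r) := by
  induction t with
  | nil => rfl
  | cons x t ih =>
    cases t with
    | nil => rfl
    | cons y t => simp only [cons_append, pairs_cons_cons] at ih ⊢; rw [ih]

lemma headD_append_cons {α : Type*} (t : List α) (a : α) (r r' : List α) (d : α) :
    (t ++ a :: r).headD d = (t ++ a :: r').headD d := by
  cases t <;> rfl

lemma getLastD_append_cons {α : Type*} (t : List α) (a : α) (r : List α) (d : α) :
    (t ++ a :: r).getLastD d = r.getLastD a := by
  induction t generalizing d with
  | nil => rw [nil_append, getLastD_cons]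
  | cons x t ih => rw [cons_append, getLastD_cons, ih]

lemma insertGap_append_cons (t : List ℕ) (a m : ℕ) (r : List ℕ) :
    insertGap (t ++ a :: r) (t.length + 1) m = t ++ a :: m :: r := by
  simp [insertGap, take_append, drop_append, take_of_length_le, drop_eq_nil_of_le]

def GapInsertionLaws (l : List ℕ) (j m : ℕ) : Prop :=
  statB (insertGap l j m) = statB l + 1 - (if IsBGap l j then 1 else 0) ∧
  statC (insertGap l j m) = statC l + 1 - (if IsCGap l j then 1 else 0) ∧
  statA (insertGap l j m) = statA l - (if IsAGap l j then 1 else 0) ∧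
  statD (insertGap l j m) = statD l - (if IsDGap l j then 1 else 0) ∧
  statE (insertGap l j m) = statE l - (if IsEGap l j then 1 else 0)

theorem gapInsertionLaws_zero {m : ℕ} (hm : Odd m) (l : List ℕ) (hl : l.headD 0 < m) :
    GapInsertionLaws l 0 m := by
  have hm' : ¬ Even m := Nat.not_even_iff_odd.mpr hm
  cases l with
  | nil =>
    simp [GapInsertionLaws, insertGap, statA, statB, statC, statD, statE, IsAGap, IsBGap,
      IsCGap, IsDGap, IsEGap, pairs, hm, hm']
  | cons b r =>
    have hb : b < m := hl
    have hmb : ¬ m < b := by omega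
    have hins : insertGap (b :: r) 0 m = m :: b :: r := rfl
    simp only [GapInsertionLaws, hins, statA, statB, statC, statD, statE, pairs_cons_cons,
      countP_cons, getLastD_cons, headD_cons]
    simp [IsAGap, IsBGap, IsCGap, IsDGap, IsEGap, hm, hm', hb, hmb, entry]
    refine ⟨?_, ?_, ?_⟩ <;> grind

theorem gapInsertionLaws_interior {m : ℕ} (hm : Odd m) (t : List ℕ) {a b : ℕ} (d : List ℕ)
    (ha : a < m) (hb : b < m) : GapInsertionLaws (t ++ a :: b :: d) (t.length + 1) m := by
  have hm' : ¬ Even m := Nat.not_even_iff_odd.mpr hm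
  have hma : ¬ m < a := by omega
  have hmb : ¬ m < b := by omega
  have hea : entry (t ++ a :: b :: d) t.length = a := by simp [entry]
  have heb : entry (t ++ a :: b :: d) (t.length + 1) = b := by simp [entry]
  simp only [GapInsertionLaws, insertGap_append_cons, statA, statB, statC, statD, statE]
  rw [pairs_append_cons t a (m :: b :: d), pairs_append_cons t a (b :: d),
    headD_append_cons t a (m :: b :: d) (b :: d), headD_append_cons t a (m :: b :: d) (b :: d)]
  simp only [countP_append, pairs_cons_cons, countP_cons, getLastD_append_cons, getLastD_cons]
  simp [IsAGap, IsBGap, IsCGap, IsDGap, IsEGap, hea, heb, hm, hm', hma, hmb, ha, Nat.even_or_odd a]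
  refine ⟨?_, ?_, ?_, ?_⟩ <;> grind

theorem gapInsertionLaws_last {m : ℕ} (hm : Odd m) (t : List ℕ) {z : ℕ} (hz : z < m) :
    GapInsertionLaws (t ++ [z]) (t.length + 1) m := by
  have hm' : ¬ Even m := Nat.not_even_iff_odd.mpr hm
  have hmz : ¬ m < z := by omega
  simp only [GapInsertionLaws, insertGap_append_cons, statA, statB, statC, statD, statE]
  rw [pairs_append_cons t z [m], headD_append_cons t z [m] [], headD_append_cons t z [m] []]
  simp only [countP_append, pairs_cons_cons, countP_cons, getLastD_append_cons, getLastD_cons]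
  simp [IsAGap, IsBGap, IsCGap, IsDGap, IsEGap, hm, hm', hmz, hz, Nat.even_or_odd z,
    pairs_singleton, entry]
  refine ⟨?_, ?_⟩ <;> grind

theorem gapInsertionLaws_of_forall_lt {m : ℕ} (hm : Odd m) {l : List ℕ} (hl : ∀ x ∈ l, x < m)
    {j : ℕ} (hj : j ≤ l.length) : GapInsertionLaws l j m := by
  rcases Nat.eq_zero_or_pos j with rfl | hj0
  · refine gapInsertionLaws_zero hm l ?_
    cases l with
    | nil => exact hm.pos
    | cons b r => exact hl b mem_cons_self
  obtain ⟨i, rfl⟩ : ∃ i, j = i + 1 := ⟨j - 1, by omega⟩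
  rcases hj.lt_or_eq with hjl | hjl
  · have hdecomp : l.take i ++ l[i] :: l[i + 1] :: l.drop (i + 2) = l := by
      rw [← drop_eq_getElem_cons, ← drop_eq_getElem_cons, take_append_drop]
    have key := gapInsertionLaws_interior hm (l.take i) (l.drop (i + 2))
      (hl l[i] (getElem_mem _)) (hl l[i + 1] (getElem_mem _))
    rwa [hdecomp, length_take_of_le (by omega)] at key
  · have hne : l ≠ [] := ne_nil_of_length_pos (by omega)
    have key := gapInsertionLaws_last hm l.dropLast (hl _ (getLast_mem hne))
    rwa [dropLast_append_getLast, length_dropLast, ← hjl, Nat.add_sub_cancel] at key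

theorem stmt6 (n : ℕ) (hn : Even n) (l : List ℕ) (hl : IsPermOf n l) (j : ℕ) (hj : j ≤ n)
    (q : List ℕ) (hq : q = insertGap l j (n + 1)) :
    statB q = statB l + 1 - (if IsBGap l j then 1 else 0) ∧
    statC q = statC l + 1 - (if IsCGap l j then 1 else 0) ∧
    statA q = statA l - (if IsAGap l j then 1 else 0) ∧
    statD q = statD l - (if IsDGap l j then 1 else 0) ∧
    statE q = statE l - (if IsEGap l j then 1 else 0) := by
  subst hq
  have hlen : l.length = n := by simpa using hl.length_eq
  have hlt : ∀ x ∈ l, x < n + 1 := fun x hx => by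
    have := mem_range'_1.mp (hl.subset hx)
    omega
  exact gapInsertionLaws_of_forall_lt hn.add_one hlt (hlen ▸ hj)
end

section
/- Let n be odd and let p be a permutation of {1,...,n}. Let q be obtained from p by inserting n+1 at the first gap (before p_1). Then A(q) = A(p) + 1, and B(q) = B(p), C(q) = C(p), D(q) = D(p), E(q) = E(p). -/
open List
open scoped Classical

/-! Prepending an even letter `m` to a nonempty word `a :: t` adds the single adjacent pair
`(m, a)` and replaces the first letter. An even `m` never starts a pair counted by `B` or `D`;
`A` counts `(m, a)` exactly when `a` is even and `C` exactly when `a` is odd, which is what the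
old first-letter terms `[a even]` and `[a odd]` contributed. The new first letter `m` adds one
to `A`, and the last letter is unchanged. -/

lemma pairs_cons_cons_s13 (m a : ℕ) (t : List ℕ) : pairs (m :: a :: t) = (m, a) :: pairs (a :: t) :=
  rfl

section PrependEven

variable {m : ℕ} (a : ℕ) (t : List ℕ)

lemma statA_cons_cons_of_even (hm : Even m) : statA (m :: a :: t) = statA (a :: t) + 1 := by
  by_cases ha : Even a <;> simp [statA, pairs_cons_cons_s13, hm, ha]

lemma statB_cons_cons_of_even (hm : Even m) : statB (m :: a :: t) = statB (a :: t) := by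
  simp [statB, pairs_cons_cons_s13, Nat.not_odd_iff_even.mpr hm]

lemma statC_cons_cons_of_even (hm : Even m) : statC (m :: a :: t) = statC (a :: t) := by
  by_cases ha : Odd a <;> simp [statC, pairs_cons_cons_s13, hm, Nat.not_odd_iff_even.mpr hm, ha]

lemma statD_cons_cons_of_even (hm : Even m) : statD (m :: a :: t) = statD (a :: t) := by
  simp [statD, pairs_cons_cons_s13, Nat.not_odd_iff_even.mpr hm]

end PrependEven

lemma statE_cons_cons (m a : ℕ) (t : List ℕ) : statE (m :: a :: t) = statE (a :: t) := by
  simp [statE]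

lemma IsPermOf.ne_nil {n : ℕ} {l : List ℕ} (hl : IsPermOf n l) (hn : n ≠ 0) : l ≠ [] := by
  rintro rfl
  exact hn (by simpa using hl.length_eq.symm)

theorem stmt13 (n : ℕ) (hn : Odd n) (l : List ℕ) (hl : IsPermOf n l)
    (q : List ℕ) (hq : q = (n + 1) :: l) :
    statA q = statA l + 1 ∧ statB q = statB l ∧ statC q = statC l ∧
    statD q = statD l ∧ statE q = statE l := by
  obtain ⟨a, t, rfl⟩ := List.exists_cons_of_ne_nil (hl.ne_nil hn.pos.ne')
  have hev : Even (n + 1) := hn.add_one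
  subst hq
  exact ⟨statA_cons_cons_of_even a t hev, statB_cons_cons_of_even a t hev,
    statC_cons_cons_of_even a t hev, statD_cons_cons_of_even a t hev, statE_cons_cons _ a t⟩
end

section
/- For every n >= 1 and every permutation p of {1,...,n}, if q is obtained from p by inserting n+1 at some gap j in {0,...,n}, then S17(q) = S17(p) if n >= 1 and j is arbitrary, except when p is the identity and j = n, in which case S17(q) = n+1. More precisely: S17(q) = n+1 if p = id_n and n+1 is appended at the end; otherwise S17(q) = S17(p). -/
open List
open scoped Classical

/-!
Inserting `n + 1` into `l` does not change the relative positions of `1, …, n`, so for `i ≤ n` the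
values `1, …, i` are in order in `q` exactly when they are in `l`. Hence `S17 q` can differ from
`S17 l` only by reaching `n + 1`; but then `q`, a permutation of `1, …, n + 1` with all values in
order, is the identity word, which forces `l = id_n` and `j = n`.
-/

lemma Nat.findGreatest_congr_of_le {P Q : ℕ → Prop} [DecidablePred P] [DecidablePred Q] {n : ℕ}
    (h : ∀ i ≤ n, P i ↔ Q i) : Nat.findGreatest P n = Nat.findGreatest Q n := by
  induction n with
  | zero => rfl
  | succ n ih =>
    simp only [Nat.findGreatest_succ, h (n + 1) le_rfl, ih fun i hi => h i (by omega)]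

namespace List

lemma idxOf_range'_one {n k : ℕ} (hk : k < n) : (range' 1 n).idxOf (k + 1) = k := by
  have hk' : k < (range' 1 n).length := by simpa using hk
  simpa [getElem_range', Nat.add_comm] using (nodup_range' (s := 1) (n := n)).idxOf_getElem k hk'

end List

open List

section InsertGap

variable {l : List ℕ} {j m : ℕ}

lemma length_insertGap : (insertGap l j m).length = l.length + 1 := by
  simp only [insertGap, length_append, length_cons, length_take, length_drop]
  omega

lemma insertGap_perm : insertGap l j m ~ m :: l := by
  simpa only [insertGap, take_append_drop] using perm_middle (l₁ := l.take j) (l₂ := l.drop j)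

lemma take_insertGap (hj : j ≤ l.length) : (insertGap l j m).take j = l.take j :=
  take_left' (by simp [hj])

lemma idxOf_insertGap_self (hm : m ∉ l) (hj : j ≤ l.length) : (insertGap l j m).idxOf m = j := by
  have hm' : m ∉ l.take j := fun h => hm (mem_of_mem_take h)
  simp [insertGap, idxOf_append_of_notMem hm', hj]

lemma idxOf_insertGap_of_ne (hj : j ≤ l.length) {k : ℕ} (hk : k ≠ m) :
    (insertGap l j m).idxOf k = if l.idxOf k < j then l.idxOf k else l.idxOf k + 1 := by
  have hsplit := take_append_drop j l
  by_cases hmem : k ∈ l.take j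
  · have hidx : l.idxOf k = (l.take j).idxOf k := by
      rw [← idxOf_append_of_mem (l₂ := l.drop j) hmem, hsplit]
    have hlt : (l.take j).idxOf k < j :=
      lt_of_lt_of_le (idxOf_lt_length_iff.2 hmem) (length_take_le _ _)
    rw [insertGap, idxOf_append_of_mem hmem, if_pos (hidx ▸ hlt), hidx]
  · have hidx : l.idxOf k = j + (l.drop j).idxOf k := by
      have := idxOf_append_of_notMem (l₂ := l.drop j) hmem
      rwa [hsplit, length_take_of_le hj] at this
    rw [insertGap, idxOf_append_of_notMem hmem, idxOf_cons_ne _ (Ne.symm hk),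
      length_take_of_le hj, if_neg (by omega), hidx, Nat.add_assoc]

lemma idxOf_insertGap_lt_idxOf_insertGap_iff (hj : j ≤ l.length) {a b : ℕ} (ha : a ≠ m)
    (hb : b ≠ m) :
    (insertGap l j m).idxOf a < (insertGap l j m).idxOf b ↔ l.idxOf a < l.idxOf b := by
  rw [idxOf_insertGap_of_ne hj ha, idxOf_insertGap_of_ne hj hb]
  split_ifs <;> omega

end InsertGap

lemma insertGap_range'_one (n : ℕ) : insertGap (range' 1 n) n (n + 1) = range' 1 (n + 1) := by
  simp [insertGap, range'_1_concat, Nat.add_comm]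

def InOrderUpTo (l : List ℕ) (i : ℕ) : Prop := ∀ k < i, 1 ≤ k → l.idxOf k < l.idxOf (k + 1)

lemma S17_eq_findGreatest (l : List ℕ) : S17 l = Nat.findGreatest (InOrderUpTo l) l.length := by
  unfold S17 InOrderUpTo
  -- the two sides differ only in their `Decidable` instances
  convert rfl

lemma inOrderUpTo_range'_one (n : ℕ) : InOrderUpTo (range' 1 n) n := fun k hk hk1 => by
  obtain ⟨k, rfl⟩ := Nat.exists_eq_add_of_le' hk1
  rw [idxOf_range'_one (by omega), idxOf_range'_one hk]
  omega

lemma S17_range'_one (n : ℕ) : S17 (range' 1 n) = n := by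
  rw [S17_eq_findGreatest, length_range']
  exact Nat.findGreatest_eq (inOrderUpTo_range'_one n)

lemma inOrderUpTo_insertGap_iff {l : List ℕ} {j m i : ℕ} (hj : j ≤ l.length) (hi : i < m) :
    InOrderUpTo (insertGap l j m) i ↔ InOrderUpTo l i :=
  forall₂_congr fun k hk => imp_congr_right fun _ =>
    idxOf_insertGap_lt_idxOf_insertGap_iff hj (by omega) (by omega)

lemma eq_range'_one_of_perm_of_inOrderUpTo {n : ℕ} {l : List ℕ} (hl : l ~ range' 1 n)
    (h : InOrderUpTo l n) : l = range' 1 n := by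
  have hlen : l.length = n := by simpa using hl.length_eq
  have hmem {k : ℕ} (hk : k < n) : k + 1 ∈ l := by
    rw [hl.mem_iff, mem_range'_1]
    omega
  have hmono : StrictMonoOn (fun k => l.idxOf (k + 1)) (Set.Iio n) :=
    strictMonoOn_of_lt_succ Set.ordConnected_Iio fun k _ _ hk =>
      h (k + 1) (by simpa using hk) (by omega)
  let g : Fin n → Fin n := fun k => ⟨l.idxOf (k + 1 : ℕ), hlen ▸ idxOf_lt_length_iff.2 (hmem k.2)⟩
  have hg : StrictMono g := fun a b hab => hmono a.2 b.2 hab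
  refine ext_getElem (by simp [hlen]) fun i hi _ => ?_
  have hgi : l.idxOf (i + 1) = i := congrArg Fin.val (hg.apply_eq (x := ⟨i, hlen ▸ hi⟩))
  have hget := getElem_idxOf (idxOf_lt_length_iff.2 (hmem (hlen ▸ hi)))
  simp only [hgi] at hget
  rw [getElem_range', hget]
  omega

theorem stmt17_general (n : ℕ) (l : List ℕ) (hl : IsPermOf n l) (j : ℕ) (hj : j ≤ n)
    (q : List ℕ) (hq : q = insertGap l j (n + 1)) :
    (l = List.range' 1 n ∧ j = n → S17 q = n + 1) ∧
    (¬(l = List.range' 1 n ∧ j = n) → S17 q = S17 l) := by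
  subst hq
  have hlen : l.length = n := by simpa using hl.length_eq
  have hjl : j ≤ l.length := hlen ▸ hj
  refine ⟨fun ⟨hid, hjn⟩ => ?_, fun hne => ?_⟩
  · subst hid hjn
    rw [insertGap_range'_one, S17_range'_one]
  · have hm : n + 1 ∉ l := fun h => by
      have := mem_range'_1.1 (hl.subset h)
      omega
    have hqperm : insertGap l j (n + 1) ~ range' 1 (n + 1) := by
      rw [range'_1_concat, Nat.add_comm 1 n]
      exact insertGap_perm.trans ((hl.cons _).trans (perm_append_singleton _ _).symm)
    have hnot : ¬InOrderUpTo (insertGap l j (n + 1)) (n + 1) := fun h => by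
      have hq := eq_range'_one_of_perm_of_inOrderUpTo hqperm h
      have hjn : j = n := by
        rw [← idxOf_insertGap_self hm hjl, hq, idxOf_range'_one (Nat.lt_succ_self n)]
      refine hne ⟨?_, hjn⟩
      calc l = l.take j := (take_of_length_le (hjn ▸ hlen).le).symm
        _ = (insertGap l j (n + 1)).take j := (take_insertGap hjl).symm
        _ = range' 1 n := by rw [hq, take_range'_of_length_ge (by omega), hjn]
    rw [S17_eq_findGreatest, S17_eq_findGreatest, length_insertGap, hlen,
      Nat.findGreatest_of_not hnot]
    exact Nat.findGreatest_congr_of_le fun i hi => inOrderUpTo_insertGap_iff hjl (by omega)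

theorem stmt17 (n : ℕ) (hn : 1 ≤ n) (l : List ℕ) (hl : IsPermOf n l) (j : ℕ) (hj : j ≤ n)
    (q : List ℕ) (hq : q = insertGap l j (n + 1)) :
    (l = List.range' 1 n ∧ j = n → S17 q = n + 1) ∧
    (¬(l = List.range' 1 n ∧ j = n) → S17 q = S17 l) :=
  stmt17_general n l hl j hj q hq
end
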